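/- The generating polynomial of the statistic maj^+ over 321-avoiding centrosymmetric involutions of S_{2n} satisfies ∑_{π ∈ I^C_{2n}(321)} q^{maj^+(π)} = ∑_{h=0}^{n} q^{n-h} · [n choose h]_q, where [n choose h]_q denotes the Gaussian (q-)binomial coefficient. -/

import Mathlib

open Finset Polynomial
open scoped Classical

/-- 1-based value of a permutation of `Fin m`: `pval π i = π(i)` for `1 ≤ i ≤ m`. -/
def pval {m : ℕ} (π : Equiv.Perm (Fin m)) (i : ℕ) : ℕ :=
  if h : i - 1 < m then (π ⟨i - 1, h⟩ : ℕ) + 1 else 0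

/-- `π` is centrosymmetric: `π(i) + π(m+1-i) = m+1` for all `1 ≤ i ≤ m`. -/
def Centro {m : ℕ} (π : Equiv.Perm (Fin m)) : Prop :=
  ∀ i ∈ Finset.Icc 1 m, pval π i + pval π (m + 1 - i) = m + 1

/-- `π` avoids the pattern 321: no decreasing subsequence of length 3. -/
def Avoids321 {m : ℕ} (π : Equiv.Perm (Fin m)) : Prop :=
  ¬ ∃ i j k : Fin m, i < j ∧ j < k ∧ π k < π j ∧ π j < π i

/-- The descent set of `π`: positions `1 ≤ i < m` with `π(i) > π(i+1)`. -/
def DesSet {m : ℕ} (π : Equiv.Perm (Fin m)) : Finset ℕ :=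
  (Finset.Ico 1 m).filter (fun i => pval π (i + 1) < pval π i)

/-- The number of descents of `π`. -/
def desNum {m : ℕ} (π : Equiv.Perm (Fin m)) : ℕ := (DesSet π).card

/-- The major index of `π`: the sum of the descent positions. -/
def majStat {m : ℕ} (π : Equiv.Perm (Fin m)) : ℕ := ∑ i ∈ DesSet π, i

/-- The excedances of `π ∈ S_{2n}` among positions `1,…,n`. -/
def Epi {n : ℕ} (π : Equiv.Perm (Fin (2 * n))) : Finset ℕ :=
  (Finset.Icc 1 n).filter (fun i => i < pval π i)

/-- The set `I^C_{2n}(321)` of 321-avoiding centrosymmetric involutions of `S_{2n}`. -/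
noncomputable def ICset (n : ℕ) : Finset (Equiv.Perm (Fin (2 * n))) :=
  Finset.univ.filter (fun π => Function.Involutive π ∧ Centro π ∧ Avoids321 π)

/-- The Gaussian (q-)binomial coefficient `[n choose k]_q` as a polynomial in `q`. -/
noncomputable def qbinom : ℕ → ℕ → Polynomial ℤ
  | _, 0 => 1
  | 0, _ + 1 => 0
  | n + 1, k + 1 => qbinom n k + Polynomial.X ^ (k + 1) * qbinom n (k + 1)

/-!
A `321`-avoiding involution is a non-nesting matching: its excedances, read from left to right,
are matched in order with its deficiencies, and no arc spans a fixed point. Reading positions as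
the steps of a path (up at an excedance, down at a deficiency, flat at a fixed point), a
non-excedance is a deficiency exactly when the path is above height `0`, so the involution is
determined by its excedances. Centrosymmetry makes the second half the mirror image of the first,
so `π ↦ Epi π` is a bijection from `I^C_{2n}(321)` onto the subsets `S` of `[1, n]`, under which
the descents of `π` in `[1, n]` become the last elements of the maximal runs of consecutive
integers in `S`. Summing `q` to the total of these run ends over `S ⊆ [1, n]`, and over the sets
`S ∪ {n + 1}`, gives two sequences with the same recursions as `∑ q^{n-h} [n choose h]_q` and
`q^{n+1} ∑ [n choose h]_q`, which follow from the two `q`-Pascal rules.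
-/

section QBinomial

lemma qbinom_zero_right (n : ℕ) : qbinom n 0 = 1 := by cases n <;> rfl

lemma qbinom_succ_succ (n k : ℕ) :
    qbinom (n + 1) (k + 1) = qbinom n k + X ^ (k + 1) * qbinom n (k + 1) := rfl

lemma qbinom_eq_zero_of_lt {n k : ℕ} (h : n < k) : qbinom n k = 0 := by
  induction n generalizing k with
  | zero => obtain ⟨k, rfl⟩ := Nat.exists_eq_add_of_lt h; rfl
  | succ n ih =>
    obtain ⟨k, rfl⟩ := Nat.exists_eq_add_of_lt (Nat.zero_lt_of_lt h)
    rw [qbinom_succ_succ, ih (by omega), ih (by omega), mul_zero, add_zero]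

/-- The truncated `n - k` is harmless: for `n < k` both sides vanish. -/
lemma qbinom_succ_succ' (n k : ℕ) :
    qbinom (n + 1) (k + 1) = X ^ (n - k) * qbinom n k + qbinom n (k + 1) := by
  induction n generalizing k with
  | zero => cases k <;> simp [qbinom_succ_succ, qbinom_zero_right, qbinom_eq_zero_of_lt]
  | succ n ih =>
    cases k with
    | zero =>
      have e1 := qbinom_succ_succ (n + 1) 0
      have e2 := qbinom_succ_succ n 0
      have e3 := ih 0
      simp only [qbinom_zero_right, Nat.sub_zero] at *
      linear_combination e1 + X * e3 - e2
    | succ j =>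
      rcases Nat.lt_or_ge j n with hjn | hjn
      · obtain ⟨d, rfl⟩ := Nat.exists_eq_add_of_lt hjn
        have e1 := qbinom_succ_succ (j + d + 2) (j + 1)
        have e2 := ih j
        have e3 := ih (j + 1)
        have e4 := qbinom_succ_succ (j + d + 1) j
        have e5 := qbinom_succ_succ (j + d + 1) (j + 1)
        simp only [show j + d + 1 - j = d + 1 by omega, show j + d + 1 - (j + 1) = d by omega,
          show j + d + 1 + 1 - (j + 1) = d + 1 by omega] at *
        linear_combination e1 + e2 - e5 - X ^ (d + 1) * e4 + X ^ (j + 2) * e3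
      · rw [qbinom_succ_succ (n + 1) (j + 1),
          qbinom_eq_zero_of_lt (show n + 1 < j + 1 + 1 by omega), Nat.sub_eq_zero_of_le (by omega)]
        ring

lemma sum_range_qbinom_succ (n : ℕ) :
    ∑ h ∈ range (n + 2), qbinom (n + 1) h =
      ∑ h ∈ range (n + 1), qbinom n h + ∑ h ∈ range (n + 1), X ^ (n - h) * qbinom n h := by
  rw [sum_range_succ', qbinom_zero_right]
  simp only [qbinom_succ_succ', sum_add_distrib]
  rw [sum_range_succ (fun h => qbinom n (h + 1)), qbinom_eq_zero_of_lt (Nat.lt_succ_self n),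
    sum_range_succ' (fun h => qbinom n h), qbinom_zero_right]
  ring

lemma sum_range_X_pow_mul_qbinom_succ (n : ℕ) :
    ∑ h ∈ range (n + 2), X ^ (n + 1 - h) * qbinom (n + 1) h =
      ∑ h ∈ range (n + 1), X ^ (n - h) * qbinom n h +
        X ^ (n + 1) * ∑ h ∈ range (n + 1), qbinom n h := by
  have hterm : ∀ h ∈ range (n + 1), X ^ (n + 1 - (h + 1)) * qbinom (n + 1) (h + 1) =
      X ^ (n - h) * qbinom n h + X ^ (n + 1) * qbinom n (h + 1) := by
    intro h hh
    rw [qbinom_succ_succ, Nat.add_sub_add_right, mul_add, ← mul_assoc, ← pow_add,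
      show n - h + (h + 1) = n + 1 by have := mem_range_succ_iff.mp hh; omega]
  rw [sum_range_succ', sum_congr rfl hterm, sum_add_distrib, ← mul_sum,
    sum_range_succ (fun h => qbinom n (h + 1)), qbinom_eq_zero_of_lt (Nat.lt_succ_self n),
    sum_range_succ' (fun h => qbinom n h), qbinom_zero_right, qbinom_zero_right, Nat.sub_zero]
  ring

end QBinomial

section RunEnds

def runEndSum (S : Finset ℕ) : ℕ := ∑ p ∈ S.filter (fun p => p + 1 ∉ S), p

variable {m : ℕ} {S : Finset ℕ}

lemma filter_insert_succ_of_notMem (h2 : m + 2 ∉ S) :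
    (insert (m + 1) S).filter (fun p => p + 1 ∉ insert (m + 1) S) =
      insert (m + 1) (S.filter (fun p => p + 1 ∉ S ∧ p ≠ m)) := by
  ext p
  simp only [mem_filter, mem_insert]
  constructor
  · rintro ⟨rfl | hp, hq⟩
    · exact Or.inl rfl
    · exact Or.inr ⟨hp, fun h => hq (Or.inr h), fun h => hq (Or.inl (by omega))⟩
  · rintro (rfl | ⟨hp, hq, hne⟩)
    · exact ⟨Or.inl rfl, by rintro (h | h) <;> [omega; exact h2 h]⟩
    · exact ⟨Or.inr hp, by rintro (h | h) <;> [exact hne (by omega); exact hq h]⟩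

lemma runEndSum_insert_of_notMem (h0 : m ∉ S) (h1 : m + 1 ∉ S) (h2 : m + 2 ∉ S) :
    runEndSum (insert (m + 1) S) = runEndSum S + (m + 1) := by
  have hfilter : S.filter (fun p => p + 1 ∉ S ∧ p ≠ m) = S.filter (fun p => p + 1 ∉ S) :=
    filter_congr fun p hp => and_iff_left (ne_of_mem_of_not_mem hp h0)
  rw [runEndSum, filter_insert_succ_of_notMem h2, hfilter,
    sum_insert fun h => h1 (mem_filter.mp h).1, add_comm, runEndSum]

lemma runEndSum_insert_of_mem (h0 : m ∈ S) (h1 : m + 1 ∉ S) (h2 : m + 2 ∉ S) :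
    runEndSum (insert (m + 1) S) = runEndSum S + 1 := by
  have hm : m ∈ S.filter (fun p => p + 1 ∉ S) := mem_filter.mpr ⟨h0, h1⟩
  have hfilter :
      S.filter (fun p => p + 1 ∉ S ∧ p ≠ m) = (S.filter (fun p => p + 1 ∉ S)).erase m := by
    ext p
    simp only [mem_filter, mem_erase]
    tauto
  rw [runEndSum, filter_insert_succ_of_notMem h2, hfilter,
    sum_insert fun h => h1 (mem_filter.mp (mem_of_mem_erase h)).1, runEndSum,
    ← sum_erase_add _ _ hm]
  omega

end RunEnds

lemma sum_powerset_Icc_succ {M : Type*} [AddCommMonoid M] (n : ℕ) (f : Finset ℕ → M) :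
    ∑ S ∈ (Icc 1 (n + 1)).powerset, f S =
      ∑ S ∈ (Icc 1 n).powerset, f S + ∑ S ∈ (Icc 1 n).powerset, f (insert (n + 1) S) := by
  rw [← insert_Icc_right_eq_Icc_add_one (by omega), sum_powerset_insert (by simp)]

lemma notMem_of_mem_powerset_Icc {n k : ℕ} {S : Finset ℕ} (hS : S ∈ (Icc 1 n).powerset)
    (hk : n < k) : k ∉ S :=
  fun h => by have := mem_Icc.mp (mem_powerset.mp hS h); omega

/-- The two sums are determined together, by splitting the subsets of `[1, n + 1]` according to
whether they contain `n + 1`. -/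
lemma sum_X_pow_runEndSum (n : ℕ) :
    ∑ S ∈ (Icc 1 n).powerset, (X : ℤ[X]) ^ runEndSum S =
        ∑ h ∈ range (n + 1), X ^ (n - h) * qbinom n h ∧
      ∑ S ∈ (Icc 1 n).powerset, (X : ℤ[X]) ^ runEndSum (insert (n + 1) S) =
        X ^ (n + 1) * ∑ h ∈ range (n + 1), qbinom n h := by
  induction n with
  | zero => simp [runEndSum, qbinom_zero_right, filter_singleton]
  | succ n ih =>
    obtain ⟨ihL, ihM⟩ := ih
    constructor
    · rw [sum_powerset_Icc_succ, ihL, ihM, sum_range_X_pow_mul_qbinom_succ]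
    · have hnew : ∀ S ∈ (Icc 1 n).powerset, (X : ℤ[X]) ^ runEndSum (insert (n + 2) S) =
          X ^ (n + 2) * X ^ runEndSum S := fun S hS => by
        rw [runEndSum_insert_of_notMem (notMem_of_mem_powerset_Icc hS (by omega))
          (notMem_of_mem_powerset_Icc hS (by omega))
          (notMem_of_mem_powerset_Icc hS (by omega)), pow_add, mul_comm]
      have hext : ∀ S ∈ (Icc 1 n).powerset,
          (X : ℤ[X]) ^ runEndSum (insert (n + 2) (insert (n + 1) S)) =
            X * X ^ runEndSum (insert (n + 1) S) := fun S hS => by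
        have h2 := notMem_of_mem_powerset_Icc hS (show n < n + 2 by omega)
        have h3 := notMem_of_mem_powerset_Icc hS (show n < n + 3 by omega)
        rw [runEndSum_insert_of_mem (mem_insert_self _ _) (by simpa using h2)
          (by simpa using h3), pow_succ, mul_comm]
      rw [sum_powerset_Icc_succ, sum_congr rfl hnew, sum_congr rfl hext, ← mul_sum, ← mul_sum,
        ihL, ihM, sum_range_qbinom_succ]
      ring

section Pairing

variable {α : Type*} [LinearOrder α]

lemma exists_orderEmbOfFin_eq {s : Finset α} {k : ℕ} (h : s.card = k) {x : α} (hx : x ∈ s) :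
    ∃ t, s.orderEmbOfFin h t = x := by
  rwa [← Set.mem_range, range_orderEmbOfFin]

lemma orderIsoOfFin_symm_orderEmbOfFin {s : Finset α} {k : ℕ} (h : s.card = k) (t : Fin k) :
    (s.orderIsoOfFin h).symm ⟨s.orderEmbOfFin h t, orderEmbOfFin_mem s h t⟩ = t :=
  (s.orderIsoOfFin h).symm_apply_eq.mpr (Subtype.ext rfl)

lemma card_filter_lt_orderEmbOfFin {s : Finset α} {k : ℕ} (h : s.card = k) (t : Fin k) :
    #(s.filter (· < s.orderEmbOfFin h t)) = t := by
  have himage : (Iio t).image (s.orderEmbOfFin h) = s.filter (· < s.orderEmbOfFin h t) := by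
    ext y
    simp only [mem_image, mem_filter, mem_Iio]
    constructor
    · rintro ⟨u, hu, rfl⟩
      exact ⟨orderEmbOfFin_mem s h u, (s.orderEmbOfFin h).strictMono hu⟩
    · rintro ⟨hy, hlt⟩
      obtain ⟨u, rfl⟩ := exists_orderEmbOfFin_eq h hy
      exact ⟨u, (s.orderEmbOfFin h).lt_iff_lt.mp hlt, rfl⟩
  rw [← himage, card_image_of_injective _ (s.orderEmbOfFin h).injective, Fin.card_Iio]

lemma orderEmbOfFin_le_iff {s : Finset α} {k : ℕ} (h : s.card = k) (t : Fin k) (x : α) :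
    s.orderEmbOfFin h t ≤ x ↔ (t : ℕ) < #(s.filter (· ≤ x)) := by
  have hcount := card_filter_lt_orderEmbOfFin h t
  constructor
  · intro hle
    have hsub : insert (s.orderEmbOfFin h t) (s.filter (· < s.orderEmbOfFin h t)) ⊆
        s.filter (· ≤ x) := by
      intro y hy
      rcases mem_insert.mp hy with rfl | hy
      · exact mem_filter.mpr ⟨orderEmbOfFin_mem s h t, hle⟩
      · exact mem_filter.mpr ⟨(mem_filter.mp hy).1, ((mem_filter.mp hy).2.trans_le hle).le⟩
    have := card_le_card hsub
    rw [card_insert_of_notMem (by simp), hcount] at this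
    omega
  · intro hlt
    by_contra! hgt
    have hsub : s.filter (· ≤ x) ⊆ s.filter (· < s.orderEmbOfFin h t) :=
      fun y hy => mem_filter.mpr ⟨(mem_filter.mp hy).1, (mem_filter.mp hy).2.trans_lt hgt⟩
    have := card_le_card hsub
    omega

variable {A B : Finset α}

def pairing (A B : Finset α) (h : B.card = A.card) (p : α) : α :=
  if hp : p ∈ A then B.orderEmbOfFin h ((A.orderIsoOfFin rfl).symm ⟨p, hp⟩)
  else if hp : p ∈ B then A.orderEmbOfFin rfl ((B.orderIsoOfFin h).symm ⟨p, hp⟩)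
  else p

variable (h : B.card = A.card)

lemma pairing_orderEmbOfFin_left (t : Fin A.card) :
    pairing A B h (A.orderEmbOfFin rfl t) = B.orderEmbOfFin h t := by
  rw [pairing, dif_pos (orderEmbOfFin_mem A rfl t), orderIsoOfFin_symm_orderEmbOfFin]

lemma pairing_orderEmbOfFin_right (hAB : Disjoint A B) (t : Fin A.card) :
    pairing A B h (B.orderEmbOfFin h t) = A.orderEmbOfFin rfl t := by
  rw [pairing, dif_neg (disjoint_right.mp hAB (orderEmbOfFin_mem B h t)),
    dif_pos (orderEmbOfFin_mem B h t), orderIsoOfFin_symm_orderEmbOfFin]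

lemma pairing_of_notMem {p : α} (hA : p ∉ A) (hB : p ∉ B) : pairing A B h p = p := by
  rw [pairing, dif_neg hA, dif_neg hB]

lemma pairing_mem_right {p : α} (hp : p ∈ A) : pairing A B h p ∈ B := by
  obtain ⟨t, rfl⟩ := exists_orderEmbOfFin_eq rfl hp
  rw [pairing_orderEmbOfFin_left]
  exact orderEmbOfFin_mem B h t

lemma pairing_pairing (hAB : Disjoint A B) (p : α) : pairing A B h (pairing A B h p) = p := by
  by_cases hA : p ∈ A
  · obtain ⟨t, rfl⟩ := exists_orderEmbOfFin_eq rfl hA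
    rw [pairing_orderEmbOfFin_left, pairing_orderEmbOfFin_right h hAB]
  by_cases hB : p ∈ B
  · obtain ⟨t, rfl⟩ := exists_orderEmbOfFin_eq h hB
    rw [pairing_orderEmbOfFin_right h hAB, pairing_orderEmbOfFin_left]
  rw [pairing_of_notMem h hA hB, pairing_of_notMem h hA hB]

lemma pairing_mem_of_subset {s : Finset α} (hA : A ⊆ s) (hB : B ⊆ s) {p : α} (hp : p ∈ s) :
    pairing A B h p ∈ s := by
  by_cases hpA : p ∈ A
  · exact hB (pairing_mem_right h hpA)
  by_cases hpB : p ∈ B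
  · obtain ⟨t, rfl⟩ := exists_orderEmbOfFin_eq h hpB
    rw [pairing, dif_neg hpA, dif_pos hpB]
    exact hA (orderEmbOfFin_mem A rfl _)
  rwa [pairing_of_notMem h hpA hpB]

lemma pairing_lt_pairing_of_mem_left {p q : α} (hp : p ∈ A) (hq : q ∈ A) (hpq : p < q) :
    pairing A B h p < pairing A B h q := by
  obtain ⟨s, rfl⟩ := exists_orderEmbOfFin_eq rfl hp
  obtain ⟨t, rfl⟩ := exists_orderEmbOfFin_eq rfl hq
  rw [pairing_orderEmbOfFin_left, pairing_orderEmbOfFin_left]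
  exact (B.orderEmbOfFin h).lt_iff_lt.mpr ((A.orderEmbOfFin rfl).lt_iff_lt.mp hpq)

lemma pairing_lt_pairing_of_mem_right (hAB : Disjoint A B) {p q : α} (hp : p ∈ B) (hq : q ∈ B)
    (hpq : p < q) : pairing A B h p < pairing A B h q := by
  obtain ⟨s, rfl⟩ := exists_orderEmbOfFin_eq h hp
  obtain ⟨t, rfl⟩ := exists_orderEmbOfFin_eq h hq
  rw [pairing_orderEmbOfFin_right h hAB, pairing_orderEmbOfFin_right h hAB]
  exact (A.orderEmbOfFin rfl).lt_iff_lt.mpr ((B.orderEmbOfFin h).lt_iff_lt.mp hpq)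

lemma pairing_le_of_card_filter_le {p x : α} (hp : p ∈ A) (hpx : p ≤ x)
    (hx : #(A.filter (· ≤ x)) ≤ #(B.filter (· ≤ x))) : pairing A B h p ≤ x := by
  obtain ⟨t, rfl⟩ := exists_orderEmbOfFin_eq rfl hp
  rw [pairing_orderEmbOfFin_left, orderEmbOfFin_le_iff]
  exact ((orderEmbOfFin_le_iff rfl t x).mp hpx).trans_le hx

lemma eqOn_pairing {s : Finset α} {g : α → α} (hgs : ∀ p ∈ s, g p ∈ s)
    (hg : ∀ p ∈ s, g (g p) = p) (hA : ∀ p ∈ s, p < g p ↔ p ∈ A)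
    (hB : ∀ p ∈ s, g p < p ↔ p ∈ B) (hAs : A ⊆ s) (hmono : StrictMonoOn g A) :
    ∀ p ∈ s, g p = pairing A B h p := by
  have hmem : ∀ t, g (A.orderEmbOfFin rfl t) ∈ B := by
    intro t
    have hts := hAs (orderEmbOfFin_mem A rfl t)
    have hlt := (hA _ hts).mpr (orderEmbOfFin_mem A rfl t)
    exact (hB _ (hgs _ hts)).mp (by rwa [hg _ hts])
  have hcomp : (fun t => g (A.orderEmbOfFin rfl t)) = B.orderEmbOfFin h :=
    orderEmbOfFin_unique h hmem fun s t hst =>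
      hmono (orderEmbOfFin_mem A rfl s) (orderEmbOfFin_mem A rfl t)
        ((A.orderEmbOfFin rfl).lt_iff_lt.mpr hst)
  intro p hp
  by_cases hpA : p ∈ A
  · obtain ⟨t, rfl⟩ := exists_orderEmbOfFin_eq rfl hpA
    rw [pairing_orderEmbOfFin_left, ← congrFun hcomp t]
  by_cases hpB : p ∈ B
  · obtain ⟨t, rfl⟩ := exists_orderEmbOfFin_eq h hpB
    rw [pairing, dif_neg hpA, dif_pos hpB, orderIsoOfFin_symm_orderEmbOfFin, ← congrFun hcomp t,
      hg _ (hAs (orderEmbOfFin_mem A rfl t))]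
  rw [pairing_of_notMem h hpA hpB]
  have h1 := (hA p hp).not.mpr hpA
  have h2 := (hB p hp).not.mpr hpB
  exact le_antisymm (not_lt.mp h1) (not_lt.mp h2)

end Pairing

section Height

/-- The height after `p` steps of the lattice path stepping up at the elements of `S` and down
elsewhere; the truncated subtraction turns a down step at height `0` into a flat step. -/
def height (S : Finset ℕ) : ℕ → ℕ
  | 0 => 0
  | p + 1 => if p + 1 ∈ S then height S p + 1 else height S p - 1

lemma height_succ (S : Finset ℕ) (p : ℕ) :
    height S (p + 1) = if p + 1 ∈ S then height S p + 1 else height S p - 1 := rfl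

lemma card_filter_le_succ (A : Finset ℕ) (j : ℕ) :
    #{x ∈ A | x ≤ j + 1} = #{x ∈ A | x ≤ j} + if j + 1 ∈ A then 1 else 0 := by
  have hsplit : {x ∈ A | x ≤ j + 1} = {x ∈ A | x ≤ j} ∪ {x ∈ A | x = j + 1} := by
    ext x
    simp only [mem_union, mem_filter, ← and_or_left, Nat.le_succ_iff]
  rw [hsplit, card_union_of_disjoint (disjoint_filter.mpr fun _ _ h1 h2 => by omega), filter_eq']
  split_ifs <;> simp

lemma card_filter_le_of_forall_le {A : Finset ℕ} {j : ℕ} (hA : ∀ x ∈ A, x ≤ j) :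
    #{x ∈ A | x ≤ j} = #A := by
  rw [filter_true_of_mem hA]

lemma card_filter_le_eq_add_height {S C : Finset ℕ} {N : ℕ} (hS : 0 ∉ S) (hC : 0 ∉ C)
    (hSC : ∀ i, 1 ≤ i → i ≤ N → (i ∈ C ↔ i ∉ S ∧ 0 < height S (i - 1))) :
    ∀ p ≤ N, #{x ∈ S | x ≤ p} = #{x ∈ C | x ≤ p} + height S p := by
  intro p
  induction p with
  | zero =>
    intro _
    have hzero : ∀ A : Finset ℕ, 0 ∉ A → #{x ∈ A | x ≤ 0} = 0 := fun A hA => by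
      simp only [nonpos_iff_eq_zero, card_eq_zero, filter_eq_empty_iff]
      rintro x hx rfl
      exact hA hx
    rw [hzero S hS, hzero C hC]
    rfl
  | succ p ih =>
    intro hp
    have hroles := hSC (p + 1) (by omega) hp
    rw [card_filter_le_succ, card_filter_le_succ, height_succ, ih (by omega)]
    simp only [Nat.add_sub_cancel] at hroles
    by_cases hpS : p + 1 ∈ S
    · simp [hpS, hroles]
      omega
    · by_cases hh : 0 < height S p <;> simp [hpS, hroles, hh] <;> omega

end Height

section PermValues

variable {m : ℕ} {π : Equiv.Perm (Fin m)}

lemma pval_val_add_one (x : Fin m) : pval π (x + 1) = π x + 1 := by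
  rw [pval, dif_pos (by simp)]
  simp

lemma exists_val_add_one_eq {i : ℕ} (hi : i ∈ Icc 1 m) : ∃ x : Fin m, (x : ℕ) + 1 = i := by
  have := mem_Icc.mp hi
  exact ⟨⟨i - 1, by omega⟩, by simp only; omega⟩

lemma pval_mem_Icc {i : ℕ} (hi : i ∈ Icc 1 m) : pval π i ∈ Icc 1 m := by
  obtain ⟨x, rfl⟩ := exists_val_add_one_eq hi
  rw [pval_val_add_one, mem_Icc]
  exact ⟨by omega, (π x).isLt⟩

lemma pval_injOn : Set.InjOn (pval π) (Icc 1 m) := by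
  intro i hi j hj hij
  obtain ⟨x, rfl⟩ := exists_val_add_one_eq hi
  obtain ⟨y, rfl⟩ := exists_val_add_one_eq hj
  simp only [pval_val_add_one, add_left_inj, Fin.val_inj, π.apply_eq_iff_eq] at hij
  rw [hij]

lemma pval_pval (hπ : Function.Involutive π) {i : ℕ} (hi : i ∈ Icc 1 m) :
    pval π (pval π i) = i := by
  obtain ⟨x, rfl⟩ := exists_val_add_one_eq hi
  rw [pval_val_add_one, pval_val_add_one, hπ]

lemma avoids321_iff :
    Avoids321 π ↔ ∀ a b c, 1 ≤ a → a < b → b < c → c ≤ m →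
      ¬ (pval π c < pval π b ∧ pval π b < pval π a) := by
  constructor
  · rintro hav a b c ha hab hbc hc ⟨hcb, hba⟩
    obtain ⟨x, rfl⟩ := exists_val_add_one_eq (m := m) (i := a) (mem_Icc.mpr ⟨ha, by omega⟩)
    obtain ⟨y, rfl⟩ :=
      exists_val_add_one_eq (m := m) (i := b) (mem_Icc.mpr ⟨by omega, by omega⟩)
    obtain ⟨z, rfl⟩ := exists_val_add_one_eq (m := m) (i := c) (mem_Icc.mpr ⟨by omega, hc⟩)
    simp only [pval_val_add_one, add_lt_add_iff_right, Fin.val_fin_lt] at hcb hba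
    exact hav ⟨x, y, z, by simpa using hab, by simpa using hbc, hcb, hba⟩
  · rintro h ⟨x, y, z, hxy, hyz, hzy, hyx⟩
    refine h (x + 1) (y + 1) (z + 1) (by omega) (by simpa using hxy) (by simpa using hyz)
      z.isLt ?_
    simpa [pval_val_add_one] using ⟨hzy, hyx⟩

lemma avoids321_of_strictMono
    (hexc : ∀ p q, 1 ≤ p → p < q → q ≤ m → p ≤ pval π p → q ≤ pval π q →
      pval π p < pval π q)
    (hdef : ∀ p q, 1 ≤ p → p < q → q ≤ m → pval π p < p → pval π q < q →
      pval π p < pval π q) :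
    Avoids321 π := by
  rw [avoids321_iff]
  rintro a b c ha hab hbc hc ⟨hcb, hba⟩
  rcases le_or_gt c (pval π c) with hcw | hcd
  · exact absurd (hexc b c (by omega) hbc hc (by omega) hcw) (by omega)
  rcases le_or_gt a (pval π a) with haw | had
  · rcases le_or_gt b (pval π b) with hbw | hbd
    · exact absurd (hexc a b ha hab (by omega) haw hbw) (by omega)
    · exact absurd (hdef b c (by omega) hbc hc hbd hcd) (by omega)
  · exact absurd (hdef a b ha hab (by omega) had (by omega)) (by omega)

end PermValues

section PermOfInvolutiveOn

variable {m : ℕ}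

lemma perm_ext_pval {π σ : Equiv.Perm (Fin m)} (h : ∀ i ∈ Icc 1 m, pval π i = pval σ i) :
    π = σ := by
  ext x
  have := h (x + 1) (mem_Icc.mpr ⟨by omega, x.isLt⟩)
  rwa [pval_val_add_one, pval_val_add_one, add_left_inj] at this

variable (f : ℕ → ℕ) (hf : ∀ i ∈ Icc 1 m, f i ∈ Icc 1 m)
  (hff : ∀ i ∈ Icc 1 m, f (f i) = i)

def permOfInvolutiveOn : Equiv.Perm (Fin m) :=
  Function.Involutive.toPerm
    (fun x => ⟨f (x + 1) - 1, by
      have := mem_Icc.mp (hf (x + 1) (mem_Icc.mpr ⟨by omega, x.isLt⟩)); omega⟩)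
    fun x => by
      have hx : (x : ℕ) + 1 ∈ Icc 1 m := mem_Icc.mpr ⟨by omega, x.isLt⟩
      have := mem_Icc.mp (hf _ hx)
      ext
      simp only [Nat.sub_add_cancel this.1, hff _ hx, Nat.add_sub_cancel]

lemma pval_permOfInvolutiveOn {i : ℕ} (hi : i ∈ Icc 1 m) :
    pval (permOfInvolutiveOn f hf hff) i = f i := by
  obtain ⟨x, rfl⟩ := exists_val_add_one_eq hi
  rw [pval_val_add_one]
  exact Nat.sub_add_cancel (mem_Icc.mp (hf _ hi)).1

lemma involutive_permOfInvolutiveOn : Function.Involutive (permOfInvolutiveOn f hf hff) := by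
  intro x
  have hx : (x : ℕ) + 1 ∈ Icc 1 m := mem_Icc.mpr ⟨by omega, x.isLt⟩
  have h1 := pval_permOfInvolutiveOn f hf hff hx
  have h2 := pval_permOfInvolutiveOn f hf hff (hf _ hx)
  rw [pval_val_add_one] at h1
  rw [← h1, pval_val_add_one, h1, hff _ hx] at h2
  exact Fin.ext (by omega)

end PermOfInvolutiveOn

section AvoidingInvolutions

variable {m : ℕ} {π : Equiv.Perm (Fin m)}

def excedanceSet (π : Equiv.Perm (Fin m)) : Finset ℕ := {i ∈ Icc 1 m | i < pval π i}

def deficiencySet (π : Equiv.Perm (Fin m)) : Finset ℕ := {i ∈ Icc 1 m | pval π i < i}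

lemma mem_excedanceSet {i : ℕ} :
    i ∈ excedanceSet π ↔ (1 ≤ i ∧ i ≤ m) ∧ i < pval π i := by
  rw [excedanceSet, mem_filter, mem_Icc]

lemma mem_deficiencySet {i : ℕ} :
    i ∈ deficiencySet π ↔ (1 ≤ i ∧ i ≤ m) ∧ pval π i < i := by
  rw [deficiencySet, mem_filter, mem_Icc]

variable (hπ : Function.Involutive π)
include hπ

/-- Equal counts make `π` map the deficiencies up to `p` onto the excedances up to `p`, which
leaves no partner below `p + 1` for `p + 1`. -/
lemma not_pval_lt_of_card_eq {p : ℕ} (hp : p + 1 ≤ m)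
    (heq : #{i ∈ excedanceSet π | i ≤ p} = #{i ∈ deficiencySet π | i ≤ p}) :
    ¬ pval π (p + 1) < p + 1 := by
  intro hlt
  have hsub :
      {i ∈ deficiencySet π | i ≤ p}.image (pval π) ⊆ {i ∈ excedanceSet π | i ≤ p} := by
    intro y hy
    obtain ⟨x, hx, rfl⟩ := mem_image.mp hy
    obtain ⟨⟨hxI, hxlt⟩, hxp⟩ := And.imp_left mem_deficiencySet.mp (mem_filter.mp hx)
    have hv := mem_Icc.mp (pval_mem_Icc (π := π) (mem_Icc.mpr hxI))
    rw [mem_filter, mem_excedanceSet, pval_pval hπ (mem_Icc.mpr hxI)]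
    exact ⟨⟨hv, hxlt⟩, by omega⟩
  have himage := eq_of_subset_of_card_le hsub (by
    rw [card_image_of_injOn (pval_injOn.mono fun x hx => by
      have := (mem_deficiencySet.mp (mem_filter.mp hx).1).1
      exact mem_Icc.mpr this), heq])
  have hpI : p + 1 ∈ Icc 1 m := mem_Icc.mpr ⟨by omega, hp⟩
  have hv := mem_Icc.mp (pval_mem_Icc (π := π) hpI)
  have ha : pval π (p + 1) ∈ {i ∈ excedanceSet π | i ≤ p} := by
    rw [mem_filter, mem_excedanceSet, pval_pval hπ hpI]
    exact ⟨⟨hv, hlt⟩, by omega⟩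
  rw [← himage] at ha
  obtain ⟨c, hc, hca⟩ := mem_image.mp ha
  obtain ⟨⟨hcI, -⟩, hcp⟩ := And.imp_left mem_deficiencySet.mp (mem_filter.mp hc)
  have := pval_pval hπ (mem_Icc.mpr hcI)
  rw [hca, pval_pval hπ hpI] at this
  omega

variable (hav : Avoids321 π)
include hav

lemma pval_lt_pval_of_excedance {i j : ℕ} (hi : 1 ≤ i) (hij : i < j) (hj : j ≤ m)
    (hej : j < pval π j) : pval π i < pval π j := by
  have hiI : i ∈ Icc 1 m := mem_Icc.mpr ⟨hi, by omega⟩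
  have hjI : j ∈ Icc 1 m := mem_Icc.mpr ⟨by omega, hj⟩
  have hne := (pval_injOn (π := π)).ne hiI hjI (by omega)
  have hjv := mem_Icc.mp (pval_mem_Icc (π := π) hjI)
  by_contra hge
  refine (avoids321_iff.mp hav) i j (pval π j) hi hij hej hjv.2 ⟨?_, by omega⟩
  rw [pval_pval hπ hjI]
  exact hej

lemma pval_lt_of_lt_fixed {i f : ℕ} (hi : 1 ≤ i) (hif : i < f) (hf : f ≤ m)
    (hff : pval π f = f) : pval π i < f := by
  have hiI : i ∈ Icc 1 m := mem_Icc.mpr ⟨hi, by omega⟩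
  have hfI : f ∈ Icc 1 m := mem_Icc.mpr ⟨by omega, hf⟩
  have hne := (pval_injOn (π := π)).ne hiI hfI (by omega)
  have hiv := mem_Icc.mp (pval_mem_Icc (π := π) hiI)
  by_contra hge
  refine (avoids321_iff.mp hav) i f (pval π i) hi hif (by omega) hiv.2 ⟨?_, by omega⟩
  rw [pval_pval hπ hiI, hff]
  exact hif

/-- No arc spans the fixed point `p + 1`, so `π` maps the excedances up to `p` into the
deficiencies up to `p`. -/
lemma card_excedanceSet_le_of_fixed {p : ℕ} (hp : p + 1 ≤ m) (hfix : pval π (p + 1) = p + 1) :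
    #{i ∈ excedanceSet π | i ≤ p} ≤ #{i ∈ deficiencySet π | i ≤ p} := by
  refine card_le_card_of_injOn (pval π) (fun x hx => ?_) (pval_injOn.mono fun x hx => ?_)
  · obtain ⟨⟨hxI, hxlt⟩, hxp⟩ := And.imp_left mem_excedanceSet.mp (mem_filter.mp hx)
    have hv := mem_Icc.mp (pval_mem_Icc (π := π) (mem_Icc.mpr hxI))
    have := pval_lt_of_lt_fixed hπ hav hxI.1 (by omega) hp hfix
    rw [coe_filter, Set.mem_ofPred_eq, mem_deficiencySet, pval_pval hπ (mem_Icc.mpr hxI)]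
    exact ⟨⟨hv, hxlt⟩, by omega⟩
  · exact mem_Icc.mpr (mem_excedanceSet.mp (mem_filter.mp hx).1).1

theorem pval_lt_iff_height {S : Finset ℕ} {N : ℕ} (hN : N ≤ m) (hS : 0 ∉ S)
    (hSE : ∀ i, 1 ≤ i → i ≤ N → (i ∈ S ↔ i < pval π i)) :
    ∀ i, 1 ≤ i → i ≤ N → (pval π i < i ↔ i ∉ S ∧ 0 < height S (i - 1)) := by
  intro i
  induction i using Nat.strong_induction_on with
  | _ i ih =>
  intro hi hiN
  obtain ⟨p, rfl⟩ : ∃ p, i = p + 1 := ⟨i - 1, by omega⟩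
  have hcount : #{x ∈ S | x ≤ p} = #{x ∈ deficiencySet π | x ≤ p} + height S p :=
    card_filter_le_eq_add_height hS (fun h => by simp [mem_deficiencySet] at h)
      (fun j hj hjp => by
        rw [mem_deficiencySet, ← ih j (by omega) hj (by omega)]
        exact and_iff_right ⟨hj, by omega⟩) p le_rfl
  have hSE' : {x ∈ S | x ≤ p} = {x ∈ excedanceSet π | x ≤ p} := by
    ext x
    simp only [mem_filter, mem_excedanceSet]
    constructor
    · rintro ⟨hx, hxp⟩
      have hx0 : x ≠ 0 := ne_of_mem_of_not_mem hx hS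
      exact ⟨⟨⟨by omega, by omega⟩, (hSE x (by omega) (by omega)).mp hx⟩, hxp⟩
    · rintro ⟨⟨hxI, hxlt⟩, hxp⟩
      exact ⟨(hSE x hxI.1 (by omega)).mpr hxlt, hxp⟩
  rw [hSE'] at hcount
  have hp1 := hSE (p + 1) hi hiN
  rw [Nat.add_sub_cancel]
  constructor
  · intro hlt
    refine ⟨fun h => by have := hp1.mp h; omega, Nat.pos_of_ne_zero fun h0 => ?_⟩
    exact not_pval_lt_of_card_eq hπ (by omega) (by omega) hlt
  · rintro ⟨hpS, hpos⟩
    have hle : pval π (p + 1) ≤ p + 1 := not_lt.mp (mt hp1.mpr hpS)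
    refine lt_of_le_of_ne hle fun hfix => ?_
    have := card_excedanceSet_le_of_fixed hπ hav (by omega) hfix
    omega

end AvoidingInvolutions

section Rev

def rev (m p : ℕ) : ℕ := m + 1 - p

variable {m : ℕ}

lemma rev_rev {p : ℕ} (hp : p ∈ Icc 1 m) : rev m (rev m p) = p := by
  have := mem_Icc.mp hp
  unfold rev
  omega

lemma rev_mem_Icc {p : ℕ} (hp : p ∈ Icc 1 m) : rev m p ∈ Icc 1 m := by
  have := mem_Icc.mp hp
  rw [mem_Icc]
  unfold rev
  omega

lemma rev_injOn : Set.InjOn (rev m) (Icc 1 m) := fun x hx y hy hxy => by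
  rw [← rev_rev hx, hxy, rev_rev hy]

lemma card_filter_le_image_rev {A : Finset ℕ} (hA : A ⊆ Icc 1 m) {j : ℕ} (hj : j ≤ m) :
    #{x ∈ A.image (rev m) | x ≤ j} + #{x ∈ A | x ≤ m - j} = #A := by
  have himage : {x ∈ A.image (rev m) | x ≤ j} = {x ∈ A | ¬ x ≤ m - j}.image (rev m) := by
    rw [filter_image]
    congr 1
    refine filter_congr fun x hx => ?_
    have := mem_Icc.mp (hA hx)
    unfold rev
    omega
  rw [himage, card_image_of_injOn (rev_injOn.mono ((filter_subset _ _).trans hA)), add_comm,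
    card_filter_add_card_filter_not]

end Rev

section Word

variable {n : ℕ} {S : Finset ℕ}

def firstHalfClosers (n : ℕ) (S : Finset ℕ) : Finset ℕ :=
  {p ∈ Icc 1 n | p ∉ S ∧ 0 < height S (p - 1)}

/-- The excedances (openers) and deficiencies (closers) of the involution with first-half
excedance set `S`; centrosymmetry mirrors the first half onto the second, exchanging the two. -/
def openers (n : ℕ) (S : Finset ℕ) : Finset ℕ :=
  S ∪ (firstHalfClosers n S).image (rev (2 * n))

def closers (n : ℕ) (S : Finset ℕ) : Finset ℕ :=
  firstHalfClosers n S ∪ S.image (rev (2 * n))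

lemma mem_firstHalfClosers {p : ℕ} :
    p ∈ firstHalfClosers n S ↔ (1 ≤ p ∧ p ≤ n) ∧ p ∉ S ∧ 0 < height S (p - 1) := by
  rw [firstHalfClosers, mem_filter, mem_Icc]

lemma firstHalfClosers_subset : firstHalfClosers n S ⊆ Icc 1 n := filter_subset _ _

lemma image_rev_subset {A : Finset ℕ} (hA : A ⊆ Icc 1 n) :
    A.image (rev (2 * n)) ⊆ Icc (n + 1) (2 * n) := by
  intro y hy
  obtain ⟨x, hx, rfl⟩ := mem_image.mp hy
  have := mem_Icc.mp (hA hx)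
  rw [mem_Icc]
  unfold rev
  omega

lemma mem_image_rev_iff {A : Finset ℕ} (hA : A ⊆ Icc 1 n) {p : ℕ} (hp : p ∈ Icc 1 (2 * n)) :
    p ∈ A.image (rev (2 * n)) ↔ rev (2 * n) p ∈ A := by
  constructor
  · rintro h
    obtain ⟨x, hx, rfl⟩ := mem_image.mp h
    rwa [rev_rev (Icc_subset_Icc_right (by omega) (hA hx))]
  · exact fun h => mem_image.mpr ⟨_, h, rev_rev hp⟩

lemma notMem_image_rev_of_le {A : Finset ℕ} (hA : A ⊆ Icc 1 n) {p : ℕ} (hp : p ≤ n) :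
    p ∉ A.image (rev (2 * n)) :=
  fun h => by have := mem_Icc.mp (image_rev_subset hA h); omega

lemma mem_openers_of_le {p : ℕ} (hp : p ≤ n) : p ∈ openers n S ↔ p ∈ S := by
  rw [openers, mem_union, or_iff_left (notMem_image_rev_of_le firstHalfClosers_subset hp)]

lemma closers_eq_image_rev : closers n S = (openers n S).image (rev (2 * n)) := by
  rw [openers, closers, image_union, image_image, union_comm]
  have hid : Set.EqOn (rev (2 * n) ∘ rev (2 * n)) id (firstHalfClosers n S) := fun x hx =>
    rev_rev (Icc_subset_Icc_right (by omega) (firstHalfClosers_subset hx))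
  rw [image_congr hid, image_id]

variable (hS : S ⊆ Icc 1 n)
include hS

lemma mem_closers_of_le {p : ℕ} (hp : p ≤ n) :
    p ∈ closers n S ↔ p ∈ firstHalfClosers n S := by
  rw [closers, mem_union, or_iff_left (notMem_image_rev_of_le hS hp)]

lemma mem_openers_of_lt {p : ℕ} (hnp : n < p) (hp : p ≤ 2 * n) :
    p ∈ openers n S ↔ rev (2 * n) p ∈ firstHalfClosers n S := by
  rw [openers, mem_union,
    mem_image_rev_iff firstHalfClosers_subset (mem_Icc.mpr ⟨by omega, hp⟩),
    or_iff_right fun h => by have := mem_Icc.mp (hS h); omega]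

lemma mem_closers_of_lt {p : ℕ} (hnp : n < p) (hp : p ≤ 2 * n) :
    p ∈ closers n S ↔ rev (2 * n) p ∈ S := by
  rw [closers, mem_union, mem_image_rev_iff hS (mem_Icc.mpr ⟨by omega, hp⟩),
    or_iff_right fun h => by have := mem_Icc.mp (firstHalfClosers_subset h); omega]

lemma openers_subset : openers n S ⊆ Icc 1 (2 * n) :=
  union_subset (hS.trans (Icc_subset_Icc_right (by omega)))
    ((image_rev_subset firstHalfClosers_subset).trans (Icc_subset_Icc_left (by omega)))

lemma closers_subset : closers n S ⊆ Icc 1 (2 * n) :=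
  union_subset (firstHalfClosers_subset.trans (Icc_subset_Icc_right (by omega)))
    ((image_rev_subset hS).trans (Icc_subset_Icc_left (by omega)))

lemma disjoint_openers_closers : Disjoint (openers n S) (closers n S) := by
  rw [disjoint_left]
  intro p hO hC
  have hp := mem_Icc.mp (openers_subset hS hO)
  rcases le_or_gt p n with h | h
  · rw [mem_openers_of_le h] at hO
    rw [mem_closers_of_le hS h] at hC
    exact (mem_firstHalfClosers.mp hC).2.1 hO
  · rw [mem_openers_of_lt hS h hp.2] at hO
    rw [mem_closers_of_lt hS h hp.2] at hC
    exact (mem_firstHalfClosers.mp hO).2.1 hC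

lemma card_filter_le_firstHalf {p : ℕ} (hp : p ≤ n) :
    #{x ∈ S | x ≤ p} = #{x ∈ firstHalfClosers n S | x ≤ p} + height S p :=
  card_filter_le_eq_add_height (fun h => by have := mem_Icc.mp (hS h); omega)
    (fun h => by have := mem_firstHalfClosers.mp h; omega)
    (fun i hi hin => by rw [mem_firstHalfClosers]; exact and_iff_right ⟨hi, hin⟩) p hp

lemma card_filter_le_openers {j : ℕ} (hj : j ≤ 2 * n) :
    #{x ∈ openers n S | x ≤ j} =
      #{x ∈ closers n S | x ≤ j} + height S (min j (2 * n - j)) := by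
  have hCf : firstHalfClosers n S ⊆ Icc 1 n := firstHalfClosers_subset
  have hdisjO : Disjoint S ((firstHalfClosers n S).image (rev (2 * n))) :=
    disjoint_left.mpr fun a ha hb => notMem_image_rev_of_le hCf (mem_Icc.mp (hS ha)).2 hb
  have hdisjC : Disjoint (firstHalfClosers n S) (S.image (rev (2 * n))) :=
    disjoint_left.mpr fun a ha hb => notMem_image_rev_of_le hS (mem_Icc.mp (hCf ha)).2 hb
  rw [openers, closers, filter_union, filter_union,
    card_union_of_disjoint (disjoint_filter_filter hdisjO),
    card_union_of_disjoint (disjoint_filter_filter hdisjC)]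
  have hSrev := card_filter_le_image_rev (hS.trans (Icc_subset_Icc_right (by omega))) hj
  have hCrev := card_filter_le_image_rev (hCf.trans (Icc_subset_Icc_right (by omega))) hj
  have hall :
      ∀ {A : Finset ℕ} {k : ℕ}, A ⊆ Icc 1 n → n ≤ k → #{x ∈ A | x ≤ k} = #A :=
    fun hA hk => card_filter_le_of_forall_le fun x hx => (mem_Icc.mp (hA hx)).2.trans hk
  rcases le_or_gt j n with h | h
  · rw [min_eq_left (by omega)]
    have := card_filter_le_firstHalf hS h
    have := hall hS (show n ≤ 2 * n - j by omega)
    have := hall hCf (show n ≤ 2 * n - j by omega)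
    omega
  · rw [min_eq_right (by omega)]
    have := card_filter_le_firstHalf hS (show 2 * n - j ≤ n by omega)
    have := hall hS h.le
    have := hall hCf h.le
    omega

lemma card_closers : #(closers n S) = #(openers n S) := by
  have h := card_filter_le_openers hS (le_refl (2 * n))
  rw [Nat.sub_self, min_eq_right (Nat.zero_le _), height, add_zero,
    card_filter_le_of_forall_le fun x hx => (mem_Icc.mp (openers_subset hS hx)).2,
    card_filter_le_of_forall_le fun x hx => (mem_Icc.mp (closers_subset hS hx)).2] at h
  exact h.symm

end Word

section Matching

variable {n : ℕ} {S : Finset ℕ}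

def matching (n : ℕ) (S : Finset ℕ) (hS : S ⊆ Icc 1 n) : ℕ → ℕ :=
  pairing (openers n S) (closers n S) (card_closers hS)

lemma filter_lt_eq_filter_le_pred (A : Finset ℕ) {x : ℕ} (hx : 1 ≤ x) :
    {y ∈ A | y < x} = {y ∈ A | y ≤ x - 1} :=
  filter_congr fun y _ => by omega

variable (hS : S ⊆ Icc 1 n)
include hS

lemma height_pos_of_mem_closers {c : ℕ} (hc : c ∈ closers n S) :
    0 < height S (min (c - 1) (2 * n - (c - 1))) := by
  have hcI := mem_Icc.mp (closers_subset hS hc)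
  rcases le_or_gt c n with h | h
  · rw [min_eq_left (by omega)]
    exact (mem_firstHalfClosers.mp ((mem_closers_of_le hS h).mp hc)).2.2
  · have hr := (mem_closers_of_lt hS h hcI.2).mp hc
    have hrI := mem_Icc.mp (hS hr)
    obtain ⟨q, hq⟩ : ∃ q, rev (2 * n) c = q + 1 := ⟨rev (2 * n) c - 1, by omega⟩
    rw [min_eq_right (by unfold rev at hq; omega), show 2 * n - (c - 1) = q + 1 by
      unfold rev at hq; omega, height_succ, if_pos (hq ▸ hr)]
    omega

lemma height_eq_zero_of_notMem {q : ℕ} (hq : q ∈ Icc 1 (2 * n)) (hO : q ∉ openers n S)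
    (hC : q ∉ closers n S) : height S (min (q - 1) (2 * n - (q - 1))) = 0 := by
  have hqI := mem_Icc.mp hq
  have hzero : ∀ r, 1 ≤ r → r ≤ n → r ∉ S → r ∉ firstHalfClosers n S →
      height S (r - 1) = 0 := fun r hr1 hrn hrS hrC => by
      by_contra h
      exact hrC (mem_firstHalfClosers.mpr ⟨⟨hr1, hrn⟩, hrS, Nat.pos_of_ne_zero h⟩)
  rcases le_or_gt q n with h | h
  · rw [min_eq_left (by omega)]
    exact hzero q hqI.1 h (fun h' => hO ((mem_openers_of_le h).mpr h'))
      (fun h' => hC ((mem_closers_of_le hS h).mpr h'))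
  · have hrS : rev (2 * n) q ∉ S := fun h' => hC ((mem_closers_of_lt hS h hqI.2).mpr h')
    have hr := hzero (rev (2 * n) q) (by unfold rev; omega) (by unfold rev; omega) hrS
      (fun h' => hO ((mem_openers_of_lt hS h hqI.2).mpr h'))
    obtain ⟨r, hrq⟩ : ∃ r, rev (2 * n) q = r + 1 :=
      ⟨rev (2 * n) q - 1, by unfold rev; omega⟩
    rw [hrq, Nat.add_sub_cancel] at hr
    rw [hrq] at hrS
    rw [min_eq_right (by unfold rev at hrq; omega), show 2 * n - (q - 1) = r + 1 by
      unfold rev at hrq; omega, height_succ, if_neg hrS, hr]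

lemma orderEmbOfFin_openers_lt (t : Fin #(openers n S)) :
    (openers n S).orderEmbOfFin rfl t < (closers n S).orderEmbOfFin (card_closers hS) t := by
  set c := (closers n S).orderEmbOfFin (card_closers hS) t
  have hc : c ∈ closers n S := orderEmbOfFin_mem _ _ t
  have hcI := mem_Icc.mp (closers_subset hS hc)
  have hbefore := card_filter_lt_orderEmbOfFin (card_closers hS) t
  rw [filter_lt_eq_filter_le_pred _ hcI.1] at hbefore
  have hcount := card_filter_le_openers hS (j := c - 1) (by omega)
  have hpos := height_pos_of_mem_closers hS hc
  have := (orderEmbOfFin_le_iff rfl t (c - 1)).mpr (by omega)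
  omega

lemma lt_matching_of_mem_openers {p : ℕ} (hp : p ∈ openers n S) : p < matching n S hS p := by
  obtain ⟨t, rfl⟩ := exists_orderEmbOfFin_eq rfl hp
  rw [matching, pairing_orderEmbOfFin_left]
  exact orderEmbOfFin_openers_lt hS t

lemma matching_lt_of_mem_closers {p : ℕ} (hp : p ∈ closers n S) : matching n S hS p < p := by
  obtain ⟨t, rfl⟩ := exists_orderEmbOfFin_eq (card_closers hS) hp
  rw [matching, pairing_orderEmbOfFin_right _ (disjoint_openers_closers hS)]
  exact orderEmbOfFin_openers_lt hS t

lemma matching_of_notMem {p : ℕ} (hO : p ∉ openers n S) (hC : p ∉ closers n S) :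
    matching n S hS p = p :=
  pairing_of_notMem _ hO hC

lemma lt_matching_iff (p : ℕ) : p < matching n S hS p ↔ p ∈ openers n S := by
  refine ⟨fun h => ?_, lt_matching_of_mem_openers hS⟩
  by_contra hO
  by_cases hC : p ∈ closers n S
  · exact absurd (matching_lt_of_mem_closers hS hC) (by omega)
  · rw [matching_of_notMem hS hO hC] at h
    exact lt_irrefl p h

lemma matching_lt_iff (p : ℕ) : matching n S hS p < p ↔ p ∈ closers n S := by
  refine ⟨fun h => ?_, matching_lt_of_mem_closers hS⟩
  by_contra hC
  by_cases hO : p ∈ openers n S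
  · exact absurd (lt_matching_of_mem_openers hS hO) (by omega)
  · rw [matching_of_notMem hS hO hC] at h
    exact lt_irrefl p h

lemma matching_mem_Icc {p : ℕ} (hp : p ∈ Icc 1 (2 * n)) : matching n S hS p ∈ Icc 1 (2 * n) :=
  pairing_mem_of_subset _ (openers_subset hS) (closers_subset hS) hp

lemma matching_matching (p : ℕ) : matching n S hS (matching n S hS p) = p :=
  pairing_pairing _ (disjoint_openers_closers hS) p

lemma orderEmbOfFin_closers (t : Fin #(openers n S)) :
    (closers n S).orderEmbOfFin (card_closers hS) t =
      rev (2 * n) ((openers n S).orderEmbOfFin rfl t.rev) := by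
  refine (congrFun (orderEmbOfFin_unique (card_closers hS) (f := fun u =>
    rev (2 * n) ((openers n S).orderEmbOfFin rfl u.rev)) (fun u => ?_) fun u v huv => ?_) t).symm
  · rw [closers_eq_image_rev]
    exact mem_image_of_mem _ (orderEmbOfFin_mem _ _ _)
  · have hu := mem_Icc.mp (openers_subset hS (orderEmbOfFin_mem _ rfl u.rev))
    have hv := mem_Icc.mp (openers_subset hS (orderEmbOfFin_mem _ rfl v.rev))
    have := ((openers n S).orderEmbOfFin rfl).strictMono (Fin.rev_lt_rev.mpr huv)
    simp only [rev]
    omega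

lemma matching_rev {p : ℕ} (hp : p ∈ Icc 1 (2 * n)) :
    matching n S hS (rev (2 * n) p) = rev (2 * n) (matching n S hS p) := by
  have hdisj := disjoint_openers_closers hS
  have hCrev : ∀ t, rev (2 * n) ((closers n S).orderEmbOfFin (card_closers hS) t) =
      (openers n S).orderEmbOfFin rfl t.rev := fun t => by
    rw [orderEmbOfFin_closers hS, rev_rev (openers_subset hS (orderEmbOfFin_mem _ _ _))]
  have hOrev : ∀ t, rev (2 * n) ((openers n S).orderEmbOfFin rfl t) =
      (closers n S).orderEmbOfFin (card_closers hS) t.rev := fun t => by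
    rw [orderEmbOfFin_closers hS, Fin.rev_rev]
  by_cases hO : p ∈ openers n S
  · obtain ⟨t, rfl⟩ := exists_orderEmbOfFin_eq rfl hO
    rw [hOrev, matching, pairing_orderEmbOfFin_right _ hdisj, pairing_orderEmbOfFin_left, hCrev]
  by_cases hC : p ∈ closers n S
  · obtain ⟨t, rfl⟩ := exists_orderEmbOfFin_eq (card_closers hS) hC
    rw [hCrev, matching, pairing_orderEmbOfFin_left, pairing_orderEmbOfFin_right _ hdisj, hOrev]
  have hrO : rev (2 * n) p ∉ openers n S := fun h => hC (by
    rw [closers_eq_image_rev]; exact mem_image.mpr ⟨_, h, rev_rev hp⟩)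
  have hrC : rev (2 * n) p ∉ closers n S := fun h => hO (by
    rw [closers_eq_image_rev] at h
    obtain ⟨x, hx, hxp⟩ := mem_image.mp h
    rwa [← rev_injOn (openers_subset hS hx) hp hxp])
  rw [matching_of_notMem hS hrO hrC, matching_of_notMem hS hO hC]

end Matching

section MatchingOrder

variable {n : ℕ} {S : Finset ℕ} (hS : S ⊆ Icc 1 n)
include hS

/-- Fixed points lie at height `0`, so no arc of the matching spans one. -/
lemma matching_lt_of_notMem {p q : ℕ} (hp : p ∈ openers n S) (hpq : p < q)
    (hq : q ∈ Icc 1 (2 * n)) (hO : q ∉ openers n S) (hC : q ∉ closers n S) :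
    matching n S hS p < q := by
  have hqI := mem_Icc.mp hq
  have hcount := card_filter_le_openers hS (j := q - 1) (by omega)
  rw [height_eq_zero_of_notMem hS hq hO hC, add_zero] at hcount
  have := pairing_le_of_card_filter_le (card_closers hS) hp (by omega : p ≤ q - 1) hcount.le
  rw [matching]
  omega

lemma matching_lt_matching_of_le_matching {p q : ℕ} (hpq : p < q) (hq : q ≤ 2 * n)
    (hpw : p ≤ matching n S hS p) (hqw : q ≤ matching n S hS q) :
    matching n S hS p < matching n S hS q := by
  have hqC : q ∉ closers n S := fun h => by have := matching_lt_of_mem_closers hS h; omega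
  by_cases hpO : p ∈ openers n S
  · by_cases hqO : q ∈ openers n S
    · exact pairing_lt_pairing_of_mem_left _ hpO hqO hpq
    · rw [matching_of_notMem hS hqO hqC]
      exact matching_lt_of_notMem hS hpO hpq (mem_Icc.mpr ⟨by omega, hq⟩) hqO hqC
  · have hpC : p ∉ closers n S := fun h => by have := matching_lt_of_mem_closers hS h; omega
    rw [matching_of_notMem hS hpO hpC]
    omega

lemma matching_lt_matching_of_matching_lt {p q : ℕ} (hpq : p < q) (hp : matching n S hS p < p)
    (hq : matching n S hS q < q) : matching n S hS p < matching n S hS q :=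
  pairing_lt_pairing_of_mem_right _ (disjoint_openers_closers hS) ((matching_lt_iff hS p).mp hp)
    ((matching_lt_iff hS q).mp hq) hpq

lemma succ_notMem_openers {p : ℕ} (hpS : p ∈ S) (hqS : p + 1 ∉ S) :
    p + 1 ∉ openers n S := by
  have := mem_Icc.mp (hS hpS)
  rcases Nat.lt_or_ge p n with h | h
  · rwa [mem_openers_of_le (by omega)]
  · rw [mem_openers_of_lt hS (by omega) (by omega), show rev (2 * n) (p + 1) = p by
      unfold rev; omega, mem_firstHalfClosers]
    exact fun h' => h'.2.1 hpS

lemma succ_notMem_closers {p : ℕ} (hp : 1 ≤ p) (hpn : p ≤ n) (hpS : p ∉ S)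
    (hpC : p ∉ closers n S) : p + 1 ∉ closers n S := by
  have hpO : p ∉ openers n S := by rwa [mem_openers_of_le hpn]
  have hzero := height_eq_zero_of_notMem hS (mem_Icc.mpr ⟨hp, by omega⟩) hpO hpC
  rw [min_eq_left (by omega)] at hzero
  rcases Nat.lt_or_ge p n with h | h
  · rw [mem_closers_of_le hS (by omega), mem_firstHalfClosers, Nat.add_sub_cancel]
    obtain ⟨r, rfl⟩ : ∃ r, p = r + 1 := ⟨p - 1, by omega⟩
    rw [Nat.add_sub_cancel] at hzero
    rintro ⟨-, -, hpos⟩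
    rw [height_succ, if_neg hpS, hzero] at hpos
    exact lt_irrefl 0 hpos
  · rw [mem_closers_of_lt hS (by omega) (by omega), show rev (2 * n) (p + 1) = p by
      unfold rev; omega]
    exact hpS

lemma matching_succ_lt_iff {p : ℕ} (hp : 1 ≤ p) (hpn : p ≤ n) :
    matching n S hS (p + 1) < matching n S hS p ↔ p ∈ S ∧ p + 1 ∉ S := by
  constructor
  · intro hdes
    by_cases hpS : p ∈ S
    · refine ⟨hpS, fun hqS => ?_⟩
      have hq := mem_Icc.mp (hS hqS)
      have := pairing_lt_pairing_of_mem_left (card_closers hS) ((mem_openers_of_le hpn).mpr hpS)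
        ((mem_openers_of_le hq.2).mpr hqS) (p.lt_add_one)
      exact absurd hdes (not_lt.mpr this.le)
    · exfalso
      have hpO : p ∉ openers n S := by rwa [mem_openers_of_le hpn]
      have hple : matching n S hS p ≤ p := not_lt.mp (mt (lt_matching_iff hS p).mp hpO)
      have hqC : p + 1 ∈ closers n S := (matching_lt_iff hS _).mp (by omega)
      by_cases hpC : p ∈ closers n S
      · exact absurd (matching_lt_matching_of_matching_lt hS (p.lt_add_one)
          ((matching_lt_iff hS p).mpr hpC) ((matching_lt_iff hS _).mpr hqC)) (by omega)
      · exact succ_notMem_closers hS hp hpn hpS hpC hqC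
  · rintro ⟨hpS, hqS⟩
    have hpO : p ∈ openers n S := (mem_openers_of_le hpn).mpr hpS
    have hgt := lt_matching_of_mem_openers hS hpO
    have hqO := succ_notMem_openers hS hpS hqS
    have hqle : matching n S hS (p + 1) ≤ p + 1 := not_lt.mp (mt (lt_matching_iff hS _).mp hqO)
    rcases hqle.lt_or_eq with hlt | heq
    · omega
    · have hqC : p + 1 ∉ closers n S := fun h => by
        have := matching_lt_of_mem_closers hS h; omega
      have hne : matching n S hS p ≠ p + 1 := fun h =>
        hqC (h ▸ pairing_mem_right (card_closers hS) hpO)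
      omega

end MatchingOrder

section Bijection

variable {n : ℕ}

def involutionOfExcedances (n : ℕ) (S : Finset ℕ) (hS : S ⊆ Icc 1 n) :
    Equiv.Perm (Fin (2 * n)) :=
  permOfInvolutiveOn (matching n S hS) (fun _ => matching_mem_Icc hS)
    (fun p _ => matching_matching hS p)

lemma pval_involutionOfExcedances {S : Finset ℕ} (hS : S ⊆ Icc 1 n) {i : ℕ}
    (hi : i ∈ Icc 1 (2 * n)) : pval (involutionOfExcedances n S hS) i = matching n S hS i :=
  pval_permOfInvolutiveOn _ _ _ hi

lemma involutionOfExcedances_mem_ICset {S : Finset ℕ} (hS : S ⊆ Icc 1 n) :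
    involutionOfExcedances n S hS ∈ ICset n := by
  have hval := fun {i : ℕ} (hi : 1 ≤ i) (hi' : i ≤ 2 * n) =>
    pval_involutionOfExcedances hS (mem_Icc.mpr ⟨hi, hi'⟩)
  refine mem_filter.mpr ⟨mem_univ _, involutive_permOfInvolutiveOn _ _ _, fun i hi => ?_, ?_⟩
  · have hiI := mem_Icc.mp hi
    have hm := mem_Icc.mp (matching_mem_Icc hS hi)
    rw [hval hiI.1 hiI.2, hval (by omega) (by omega), show 2 * n + 1 - i = rev (2 * n) i from rfl,
      matching_rev hS hi, rev]
    omega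
  · refine avoids321_of_strictMono (fun p q hp hpq hq hpw hqw => ?_)
      (fun p q hp hpq hq hpd hqd => ?_)
    · rw [hval hp (by omega), hval (by omega) hq] at *
      exact matching_lt_matching_of_le_matching hS hpq hq hpw hqw
    · rw [hval hp (by omega), hval (by omega) hq] at *
      exact matching_lt_matching_of_matching_lt hS hpq hpd hqd

lemma Epi_involutionOfExcedances {S : Finset ℕ} (hS : S ⊆ Icc 1 n) :
    Epi (involutionOfExcedances n S hS) = S := by
  ext i
  rw [Epi, mem_filter]
  constructor
  · rintro ⟨hi, hlt⟩
    have hiI := mem_Icc.mp hi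
    rw [pval_involutionOfExcedances hS (mem_Icc.mpr ⟨hiI.1, by omega⟩), lt_matching_iff,
      mem_openers_of_le hiI.2] at hlt
    exact hlt
  · intro hiS
    have hiI := mem_Icc.mp (hS hiS)
    refine ⟨hS hiS, ?_⟩
    rw [pval_involutionOfExcedances hS (mem_Icc.mpr ⟨hiI.1, by omega⟩), lt_matching_iff,
      mem_openers_of_le hiI.2]
    exact hiS

lemma filter_DesSet_involutionOfExcedances {S : Finset ℕ} (hS : S ⊆ Icc 1 n) :
    (DesSet (involutionOfExcedances n S hS)).filter (· ≤ n) =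
      S.filter (fun p => p + 1 ∉ S) := by
  ext p
  simp only [DesSet, mem_filter, mem_Ico]
  constructor
  · rintro ⟨⟨⟨hp, -⟩, hdes⟩, hpn⟩
    rw [pval_involutionOfExcedances hS (mem_Icc.mpr ⟨by omega, by omega⟩),
      pval_involutionOfExcedances hS (mem_Icc.mpr ⟨hp, by omega⟩)] at hdes
    exact (matching_succ_lt_iff hS hp hpn).mp hdes
  · rintro ⟨hpS, hqS⟩
    have hpI := mem_Icc.mp (hS hpS)
    refine ⟨⟨⟨hpI.1, by omega⟩, ?_⟩, hpI.2⟩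
    rw [pval_involutionOfExcedances hS (mem_Icc.mpr ⟨by omega, by omega⟩),
      pval_involutionOfExcedances hS (mem_Icc.mpr ⟨hpI.1, by omega⟩)]
    exact (matching_succ_lt_iff hS hpI.1 hpI.2).mpr ⟨hpS, hqS⟩

lemma Epi_subset (π : Equiv.Perm (Fin (2 * n))) : Epi π ⊆ Icc 1 n := filter_subset _ _

/-- The first half follows from the height criterion, the second half by centrosymmetry. -/
lemma lt_pval_iff_mem_openers_and_pval_lt_iff_mem_closers {π : Equiv.Perm (Fin (2 * n))}
    (hπ : π ∈ ICset n) {p : ℕ} (hp : p ∈ Icc 1 (2 * n)) :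
    (p < pval π p ↔ p ∈ openers n (Epi π)) ∧
      (pval π p < p ↔ p ∈ closers n (Epi π)) := by
  obtain ⟨-, hinv, hcen, hav⟩ := mem_filter.mp hπ
  have hS := Epi_subset π
  have hSE : ∀ i, 1 ≤ i → i ≤ n → (i ∈ Epi π ↔ i < pval π i) := fun i hi hin => by
    rw [Epi, mem_filter, mem_Icc]
    exact and_iff_right ⟨hi, hin⟩
  have hdef := pval_lt_iff_height hinv hav (by omega) (fun h => by
    have := mem_Icc.mp (hS h); omega) hSE
  have hfirst : ∀ i, 1 ≤ i → i ≤ n →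
      (i < pval π i ↔ i ∈ Epi π) ∧ (pval π i < i ↔ i ∈ firstHalfClosers n (Epi π)) :=
    fun i hi hin => ⟨(hSE i hi hin).symm, by
      rw [hdef i hi hin, mem_firstHalfClosers]; exact (and_iff_right ⟨hi, hin⟩).symm⟩
  have hpI := mem_Icc.mp hp
  rcases le_or_gt p n with h | h
  · rw [mem_openers_of_le h, mem_closers_of_le hS h]
    exact hfirst p hpI.1 h
  · rw [mem_openers_of_lt hS h hpI.2, mem_closers_of_lt hS h hpI.2]
    have hr : rev (2 * n) p ∈ Icc 1 (2 * n) := rev_mem_Icc hp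
    have hrI := mem_Icc.mp hr
    have hcen' := hcen _ hr
    rw [show 2 * n + 1 - rev (2 * n) p = p by unfold rev; omega] at hcen'
    have hv := mem_Icc.mp (pval_mem_Icc (π := π) hr)
    obtain ⟨h1, h2⟩ := hfirst (rev (2 * n) p) hrI.1 (by unfold rev; omega)
    have hrp : rev (2 * n) p = 2 * n + 1 - p := rfl
    rw [← h1, ← h2]
    constructor <;> constructor <;> intro <;> omega

theorem eq_involutionOfExcedances {π : Equiv.Perm (Fin (2 * n))} (hπ : π ∈ ICset n) :
    π = involutionOfExcedances n (Epi π) (Epi_subset π) := by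
  obtain ⟨-, hinv, -, hav⟩ := mem_filter.mp hπ
  have hS := Epi_subset π
  have hroles := fun p (hp : p ∈ Icc 1 (2 * n)) =>
    lt_pval_iff_mem_openers_and_pval_lt_iff_mem_closers hπ hp
  have hmono : StrictMonoOn (pval π) (openers n (Epi π)) := fun p hp q hq hpq => by
    have hqI := mem_Icc.mp (openers_subset hS hq)
    have hpI := mem_Icc.mp (openers_subset hS hp)
    exact pval_lt_pval_of_excedance hinv hav hpI.1 hpq hqI.2
      ((hroles q (openers_subset hS hq)).1.mpr hq)
  have heq := eqOn_pairing (card_closers hS) (fun p hp => pval_mem_Icc hp)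
    (fun p hp => pval_pval hinv hp) (fun p hp => (hroles p hp).1) (fun p hp => (hroles p hp).2)
    (openers_subset hS) hmono
  exact perm_ext_pval fun i hi => by
    rw [pval_involutionOfExcedances hS hi, heq i hi, matching]

end Bijection

/-- `∑_{π ∈ I^C_{2n}(321)} q^{maj^+(π)} = ∑_{h=0}^{n} q^{n-h} [n choose h]_q`. -/
theorem majPlus_generating_polynomial (n : ℕ) :
    ∑ π ∈ ICset n, (Polynomial.X : Polynomial ℤ) ^ (∑ i ∈ (DesSet π).filter (· ≤ n), i) =
      ∑ h ∈ Finset.range (n + 1), Polynomial.X ^ (n - h) * qbinom n h := by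
  rw [← (sum_X_pow_runEndSum n).1]
  refine sum_bij' (fun π _ => Epi π) (fun S hS => involutionOfExcedances n S (mem_powerset.mp hS))
    (fun π _ => mem_powerset.mpr (Epi_subset π))
    (fun _ _ => involutionOfExcedances_mem_ICset _)
    (fun _ hπ => (eq_involutionOfExcedances hπ).symm)
    (fun _ _ => Epi_involutionOfExcedances _) (fun π hπ => ?_)
  rw [eq_involutionOfExcedances hπ, filter_DesSet_involutionOfExcedances,
    Epi_involutionOfExcedances, runEndSum]
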